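/- arXiv:2507.09300 — 3 statements merged into one kernel-verified Lean document; each statement's English description precedes it below -/
import Mathlib

section
/- For a > 0 and β ≥ 0, the scalar map f(t) = t / (1 + (β t)^a)^(1/a) is strictly monotone increasing on [0, ∞). -/
theorem strain_limiting_strictMono (a β : ℝ) (ha : 0 < a) (hβ : 0 ≤ β) :
    StrictMonoOn (fun t : ℝ => t / (1 + (β * t) ^ a) ^ (1 / a)) (Set.Ici 0) := by
  intro s hs t ht hst
  simp only [Set.mem_Ici] at hs ht
  have hbs : (0:ℝ) ≤ (β * s) ^ a := Real.rpow_nonneg (mul_nonneg hβ hs) a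
  have hbt : (0:ℝ) ≤ (β * t) ^ a := Real.rpow_nonneg (mul_nonneg hβ ht) a
  have hDs : (0:ℝ) < 1 + (β * s) ^ a := by linarith
  have hDt : (0:ℝ) < 1 + (β * t) ^ a := by linarith
  have hDs' : (0:ℝ) < (1 + (β * s) ^ a) ^ (1 / a) := Real.rpow_pos_of_pos hDs _
  have hDt' : (0:ℝ) < (1 + (β * t) ^ a) ^ (1 / a) := Real.rpow_pos_of_pos hDt _
  have key : ∀ x : ℝ, 0 < x → (x ^ (1 / a)) ^ a = x := fun x hx => by
    rw [one_div, Real.rpow_inv_rpow hx.le ha.ne']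
  simp only
  rw [div_lt_div_iff₀ hDs' hDt']
  rcases eq_or_lt_of_le hs with rfl | hs'
  · simpa using mul_pos hst hDs'
  · have ht' : 0 < t := lt_trans hs' hst
    rw [← Real.rpow_lt_rpow_iff (by positivity) (by positivity) ha,
      Real.mul_rpow hs'.le hDt'.le, Real.mul_rpow ht'.le hDs'.le,
      key _ hDt, key _ hDs]
    have hcross : (β * s) ^ a * t ^ a = (β * t) ^ a * s ^ a := by
      rw [Real.mul_rpow hβ hs, Real.mul_rpow hβ ht]; ring
    have hsa : s ^ a < t ^ a := Real.rpow_lt_rpow hs hst ha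
    nlinarith [hsa, hcross]
end

section
/- For a = 1 and β ≥ 0, the map F(T) = T / (1 + β‖T‖) on a finite-dimensional real inner product space is monotone: (F(T₁) − F(T₂)) ⬝ (T₁ − T₂) ≥ 0 for all T₁, T₂. -/
/-! `F` is the radial map `T ↦ φ ‖T‖ • T` with `φ t = (1 + β t)⁻¹`. Cauchy–Schwarz bounds
`⟪F T₁ - F T₂, T₁ - T₂⟫` below by `(‖T₁‖ φ ‖T₁‖ - ‖T₂‖ φ ‖T₂‖) (‖T₁‖ - ‖T₂‖)`, which is
nonnegative because the scalar profile `t ↦ t / (1 + β t)` is nondecreasing on `[0, ∞)`. -/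

open RealInnerProductSpace Set

theorem MonotoneOn.sub_mul_sub_nonneg {s : Set ℝ} {g : ℝ → ℝ} (hg : MonotoneOn g s)
    {a b : ℝ} (ha : a ∈ s) (hb : b ∈ s) : 0 ≤ (g a - g b) * (a - b) := by
  rcases le_total a b with hab | hba
  · exact mul_nonneg_of_nonpos_of_nonpos (sub_nonpos.2 (hg ha hb hab)) (sub_nonpos.2 hab)
  · exact mul_nonneg (sub_nonneg.2 (hg hb ha hba)) (sub_nonneg.2 hba)

section Radial

variable {V : Type*} [NormedAddCommGroup V] [InnerProductSpace ℝ V]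

theorem real_inner_smul_sub_smul_sub_nonneg {c₁ c₂ : ℝ} (hc₁ : 0 ≤ c₁) (hc₂ : 0 ≤ c₂) (x y : V)
    (hnorm : 0 ≤ (c₁ * ‖x‖ - c₂ * ‖y‖) * (‖x‖ - ‖y‖)) : 0 ≤ ⟪c₁ • x - c₂ • y, x - y⟫ := by
  have hexpand : ⟪c₁ • x - c₂ • y, x - y⟫ = c₁ * ‖x‖ ^ 2 + c₂ * ‖y‖ ^ 2 - (c₁ + c₂) * ⟪x, y⟫ := by
    simp only [inner_sub_left, inner_sub_right, real_inner_smul_left,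
      real_inner_self_eq_norm_sq, real_inner_comm x y]
    ring
  have hcs : (c₁ + c₂) * ⟪x, y⟫ ≤ (c₁ + c₂) * (‖x‖ * ‖y‖) :=
    mul_le_mul_of_nonneg_left (real_inner_le_norm x y) (add_nonneg hc₁ hc₂)
  rw [hexpand]
  linarith

theorem real_inner_radial_sub_nonneg {φ : ℝ → ℝ} (hφ : ∀ t, 0 ≤ t → 0 ≤ φ t)
    (hmono : MonotoneOn (fun t => t * φ t) (Ici 0)) (x y : V) :
    0 ≤ ⟪φ ‖x‖ • x - φ ‖y‖ • y, x - y⟫ := by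
  refine real_inner_smul_sub_smul_sub_nonneg (hφ _ (norm_nonneg x)) (hφ _ (norm_nonneg y)) x y ?_
  simpa only [mul_comm (φ _)] using
    hmono.sub_mul_sub_nonneg (mem_Ici.2 (norm_nonneg x)) (mem_Ici.2 (norm_nonneg y))

end Radial

theorem monotoneOn_mul_inv_one_add_mul {β : ℝ} (hβ : 0 ≤ β) :
    MonotoneOn (fun t => t * (1 + β * t)⁻¹) (Ici 0) := by
  intro s hs t ht hst
  simp only [← div_eq_mul_inv]
  rw [div_le_div_iff₀ (by have := mem_Ici.1 hs; positivity) (by have := mem_Ici.1 ht; positivity)]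
  nlinarith

theorem strain_limiting_monotone_general
    {V : Type*} [NormedAddCommGroup V] [InnerProductSpace ℝ V]
    (β : ℝ) (hβ : 0 ≤ β) (F : V → V) (hF : ∀ T, F T = (1 + β * ‖T‖)⁻¹ • T) :
    ∀ T₁ T₂ : V, (0:ℝ) ≤ inner ℝ (F T₁ - F T₂) (T₁ - T₂) := by
  intro T₁ T₂
  rw [hF, hF]
  exact real_inner_radial_sub_nonneg (fun t ht => by positivity)
    (monotoneOn_mul_inv_one_add_mul hβ) T₁ T₂

theorem strain_limiting_monotone
    {V : Type*} [NormedAddCommGroup V] [InnerProductSpace ℝ V] [FiniteDimensional ℝ V]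
    (β : ℝ) (hβ : 0 ≤ β) (F : V → V) (hF : ∀ T, F T = (1 + β * ‖T‖)⁻¹ • T) :
    ∀ T₁ T₂ : V, (0:ℝ) ≤ inner ℝ (F T₁ - F T₂) (T₁ - T₂) :=
  strain_limiting_monotone_general β hβ F hF
end

section
/- For a = 1 and β ≥ 0, the map F(T) = T / (1 + β‖T‖) on a finite-dimensional real inner product space is Lipschitz continuous with constant 1, i.e. ‖F(T₁) − F(T₂)‖ ≤ ‖T₁ − T₂‖. -/
/-!
Expand `‖a • x - b • y‖² = (a‖x‖ - b‖y‖)² + 2ab (‖x‖‖y‖ - ⟪x, y⟫)`. The last factor is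
nonnegative by Cauchy–Schwarz, so with `a = (1 + β‖T₁‖)⁻¹`, `b = (1 + β‖T₂‖)⁻¹` it suffices that
`ab ≤ 1` and that the radial profile `r ↦ r / (1 + βr)` is `1`-Lipschitz on `[0, ∞)`; the latter
holds because its difference quotient is `1 / ((1 + βr)(1 + βs)) ≤ 1`.
-/

open RealInnerProductSpace

section RadialScaling

variable {V : Type*} [NormedAddCommGroup V] [InnerProductSpace ℝ V]

theorem norm_smul_sub_smul_sq (a b : ℝ) (x y : V) :
    ‖a • x - b • y‖ ^ 2 = (a * ‖x‖ - b * ‖y‖) ^ 2 + 2 * (a * b) * (‖x‖ * ‖y‖ - ⟪x, y⟫) := by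
  rw [norm_sub_sq_real, real_inner_smul_left, real_inner_smul_right, norm_smul, norm_smul,
    Real.norm_eq_abs, Real.norm_eq_abs, mul_pow, mul_pow, sq_abs, sq_abs]
  ring

theorem norm_smul_sub_smul_le {a b : ℝ} {x y : V} (hab : a * b ≤ 1)
    (hnorm : |a * ‖x‖ - b * ‖y‖| ≤ |‖x‖ - ‖y‖|) :
    ‖a • x - b • y‖ ≤ ‖x - y‖ := by
  have hgap : 0 ≤ ‖x‖ * ‖y‖ - ⟪x, y⟫ := sub_nonneg.mpr (real_inner_le_norm x y)
  have hsq : ‖a • x - b • y‖ ^ 2 ≤ ‖x - y‖ ^ 2 := by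
    have hxy := norm_smul_sub_smul_sq (1 : ℝ) 1 x y
    simp only [one_smul, one_mul] at hxy
    rw [norm_smul_sub_smul_sq, hxy]
    gcongr ?_ + 2 * ?_ * _
    exact sq_le_sq.mpr hnorm
  exact (pow_le_pow_iff_left₀ (norm_nonneg _) (norm_nonneg _) two_ne_zero).mp hsq

end RadialScaling

theorem abs_inv_one_add_mul_mul_sub_le {β r s : ℝ} (hβ : 0 ≤ β) (hr : 0 ≤ r) (hs : 0 ≤ s) :
    |(1 + β * r)⁻¹ * r - (1 + β * s)⁻¹ * s| ≤ |r - s| := by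
  have hr₁ : 1 ≤ 1 + β * r := le_add_of_nonneg_right (mul_nonneg hβ hr)
  have hs₁ : 1 ≤ 1 + β * s := le_add_of_nonneg_right (mul_nonneg hβ hs)
  have hdiff : (1 + β * r)⁻¹ * r - (1 + β * s)⁻¹ * s = (r - s) / ((1 + β * r) * (1 + β * s)) := by
    field_simp
    ring
  have hden : 1 ≤ (1 + β * r) * (1 + β * s) := one_le_mul_of_one_le_of_one_le hr₁ hs₁
  rw [hdiff, abs_div, abs_of_pos (zero_lt_one.trans_le hden)]
  exact div_le_self (abs_nonneg _) hden

theorem strain_limiting_lipschitz_general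
    {V : Type*} [NormedAddCommGroup V] [InnerProductSpace ℝ V]
    (β : ℝ) (hβ : 0 ≤ β) (F : V → V) (hF : ∀ T, F T = (1 + β * ‖T‖)⁻¹ • T) :
    ∀ T₁ T₂ : V, ‖F T₁ - F T₂‖ ≤ ‖T₁ - T₂‖ := by
  intro T₁ T₂
  have hscale : ∀ T : V, 0 ≤ (1 + β * ‖T‖)⁻¹ ∧ (1 + β * ‖T‖)⁻¹ ≤ 1 := fun T =>
    ⟨by positivity, inv_le_one_of_one_le₀ (le_add_of_nonneg_right (by positivity))⟩
  rw [hF, hF]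
  exact norm_smul_sub_smul_le (mul_le_one₀ (hscale T₁).2 (hscale T₂).1 (hscale T₂).2)
    (abs_inv_one_add_mul_mul_sub_le hβ (norm_nonneg _) (norm_nonneg _))

theorem strain_limiting_lipschitz
    {V : Type*} [NormedAddCommGroup V] [InnerProductSpace ℝ V] [FiniteDimensional ℝ V]
    (β : ℝ) (hβ : 0 ≤ β) (F : V → V) (hF : ∀ T, F T = (1 + β * ‖T‖)⁻¹ • T) :
    ∀ T₁ T₂ : V, ‖F T₁ - F T₂‖ ≤ ‖T₁ - T₂‖ :=
  strain_limiting_lipschitz_general β hβ F hF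
end
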